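/- Let a > 0, let k be a natural number, let t = [−5a, 5a] × [−5a, 5a] and t_r = [5a, 15a] × [−5a, 5a] in ℝ², and let S ⊆ ℝ² be a finite set with |S ∩ t| + |S ∩ t_r| ≤ k. Then for all distinct points x ∈ S ∩ closedBall((4a,0), a) and y ∈ S ∩ closedBall((2a,0), a), the number of points z ∈ S \ {x} with d(x,z) < d(x,y) is strictly less than k; that is, y is a k-nearest neighbor of x. -/

import Mathlib

open Metric

/-- The point `(x, y)` of the Euclidean plane. -/
def pt (x y : ℝ) : EuclideanSpace ℝ (Fin 2) := WithLp.toLp 2 ![x, y]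

/-- The rectangle `[x₀, x₁] × [y₀, y₁]` of the Euclidean plane. -/
def tile (x₀ x₁ y₀ y₁ : ℝ) : Set (EuclideanSpace ℝ (Fin 2)) :=
  {x | x 0 ∈ Set.Icc x₀ x₁ ∧ x 1 ∈ Set.Icc y₀ y₁}

/-! A point `x ∈ C_r` sees `y ∈ E_r` at distance at most `4a`, so every point of `S` closer to
`x` than `y` lies in the ball of radius `5a` about the centre `(4a, 0)` of `C_r`, which is
contained in `t ∪ t_r`. These points, together with `x` itself, are at most `k` points of
`S ∩ (t ∪ t_r)`, so fewer than `k` of them differ from `x`. -/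

lemma dist_pt_pt_of_snd_eq (u v w : ℝ) : dist (pt u w) (pt v w) = |u - v| := by
  simp [EuclideanSpace.dist_eq, Fin.sum_univ_two, pt, Real.dist_eq, Real.sqrt_sq_eq_abs]

lemma mem_tile_of_dist_le {p : EuclideanSpace ℝ (Fin 2)} {u v r : ℝ} (h : dist p (pt u v) ≤ r) :
    p ∈ tile (u - r) (u + r) (v - r) (v + r) := by
  have h₀ : |p 0 - u| ≤ r := (PiLp.dist_apply_le p (pt u v) 0).trans h
  have h₁ : |p 1 - v| ≤ r := (PiLp.dist_apply_le p (pt u v) 1).trans h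
  rw [abs_le] at h₀ h₁
  exact ⟨⟨by linarith, by linarith⟩, ⟨by linarith, by linarith⟩⟩

lemma tile_mono {x₀ x₁ y₀ y₁ x₀' x₁' y₀' y₁' : ℝ} (hx₀ : x₀' ≤ x₀) (hx₁ : x₁ ≤ x₁')
    (hy₀ : y₀' ≤ y₀) (hy₁ : y₁ ≤ y₁') : tile x₀ x₁ y₀ y₁ ⊆ tile x₀' x₁' y₀' y₁' :=
  fun _ ⟨h₀, h₁⟩ => ⟨Set.Icc_subset_Icc hx₀ hx₁ h₀, Set.Icc_subset_Icc hy₀ hy₁ h₁⟩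

lemma tile_subset_union (x₀ x₁ x₂ y₀ y₁ : ℝ) :
    tile x₀ x₂ y₀ y₁ ⊆ tile x₀ x₁ y₀ y₁ ∪ tile x₁ x₂ y₀ y₁ := by
  rintro p ⟨⟨h₀, h₂⟩, hy⟩
  rcases le_total (p 0) x₁ with h₁ | h₁
  · exact Or.inl ⟨⟨h₀, h₁⟩, hy⟩
  · exact Or.inr ⟨⟨h₁, h₂⟩, hy⟩

lemma closedBall_subset_tile_union {a : ℝ} (ha : 0 ≤ a) :
    closedBall (pt (4*a) 0) (5*a) ⊆
      tile (-(5*a)) (5*a) (-(5*a)) (5*a) ∪ tile (5*a) (15*a) (-(5*a)) (5*a) := by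
  intro p hp
  refine tile_subset_union _ _ _ _ _ (tile_mono ?_ ?_ ?_ ?_ (mem_tile_of_dist_le hp)) <;> linarith

lemma dist_le_of_dist_lt_dist {α : Type*} [PseudoMetricSpace α] {x y z c₁ c₂ : α} {r₁ r₂ : ℝ}
    (hx : dist x c₁ ≤ r₁) (hy : dist y c₂ ≤ r₂) (hz : dist x z < dist x y) :
    dist z c₁ ≤ 2 * r₁ + dist c₁ c₂ + r₂ := by
  have hxy : dist x y ≤ dist x c₁ + dist c₁ c₂ + dist c₂ y := dist_triangle4 x c₁ c₂ y
  have hzc : dist z c₁ ≤ dist x z + dist x c₁ := dist_comm z x ▸ dist_triangle z x c₁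
  linarith [dist_comm c₂ y]

theorem stmt_10_general (a : ℝ) (k : ℕ) (S : Set (EuclideanSpace ℝ (Fin 2)))
    (hS : S.Finite)
    (hcard : (S ∩ tile (-(5*a)) (5*a) (-(5*a)) (5*a)).ncard +
      (S ∩ tile (5*a) (15*a) (-(5*a)) (5*a)).ncard ≤ k) :
    ∀ x ∈ S ∩ closedBall (pt (4*a) 0) a, ∀ y ∈ S ∩ closedBall (pt (2*a) 0) a, x ≠ y →
      {z ∈ S \ {x} | dist x z < dist x y}.ncard < k := by
  rintro x ⟨hxS, hx⟩ y ⟨-, hy⟩ -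
  set t := tile (-(5*a)) (5*a) (-(5*a)) (5*a)
  set tᵣ := tile (5*a) (15*a) (-(5*a)) (5*a)
  have ha : 0 ≤ a := dist_nonneg.trans hx
  have hcentres : dist (pt (4*a) 0) (pt (2*a) 0) = 2 * a := by
    rw [dist_pt_pt_of_snd_eq, abs_of_nonneg (by linarith)]
    ring
  have hball : closedBall (pt (4*a) 0) (5*a) ⊆ t ∪ tᵣ := closedBall_subset_tile_union ha
  have hxU : x ∈ S ∩ t ∪ S ∩ tᵣ := by
    rw [← Set.inter_union_distrib_left]
    exact ⟨hxS, hball (closedBall_subset_closedBall (by linarith) hx)⟩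
  have hsub : {z ∈ S \ {x} | dist x z < dist x y} ⊆ S ∩ t ∪ S ∩ tᵣ := by
    rintro z ⟨⟨hzS, -⟩, hz⟩
    rw [← Set.inter_union_distrib_left]
    refine ⟨hzS, hball (mem_closedBall.2 ?_)⟩
    linarith [dist_le_of_dist_lt_dist hx hy hz]
  have hssub : {z ∈ S \ {x} | dist x z < dist x y} ⊂ S ∩ t ∪ S ∩ tᵣ :=
    hsub.ssubset_of_mem_notMem hxU fun h => h.1.2 rfl
  calc {z ∈ S \ {x} | dist x z < dist x y}.ncard
      < (S ∩ t ∪ S ∩ tᵣ).ncard :=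
        Set.ncard_lt_ncard hssub ((hS.inter_of_left _).union (hS.inter_of_left _))
    _ ≤ (S ∩ t).ncard + (S ∩ tᵣ).ncard := Set.ncard_union_le _ _
    _ ≤ k := hcard

/-- Let `a > 0`, `k : ℕ`, `t = [-5a,5a] × [-5a,5a]`, `t_r = [5a,15a] × [-5a,5a]`, and let
`S` be a finite set of points of the plane with `|S ∩ t| + |S ∩ t_r| ≤ k`. Then for all
distinct points `x ∈ S ∩ closedBall((4a,0), a)` and `y ∈ S ∩ closedBall((2a,0), a)`, the
number of points `z ∈ S \ {x}` with `dist x z < dist x y` is strictly less than `k`: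
that is, `y` is a `k`-nearest neighbor of `x`. -/
theorem stmt_10 (a : ℝ) (ha : 0 < a) (k : ℕ) (S : Set (EuclideanSpace ℝ (Fin 2)))
    (hS : S.Finite)
    (hcard : (S ∩ tile (-(5*a)) (5*a) (-(5*a)) (5*a)).ncard +
      (S ∩ tile (5*a) (15*a) (-(5*a)) (5*a)).ncard ≤ k) :
    ∀ x ∈ S ∩ closedBall (pt (4*a) 0) a, ∀ y ∈ S ∩ closedBall (pt (2*a) 0) a, x ≠ y →
      {z ∈ S \ {x} | dist x z < dist x y}.ncard < k :=
  stmt_10_general a k S hS hcard
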